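/- arXiv:2604.05217 — 2 statements merged into one kernel-verified Lean document; each statement's English description precedes it below -/
import Mathlib

section
/- Converse direction of classical MDS: let D ∈ ℝ^{n×n} be a symmetric matrix with zero diagonal and non-negative entries, and let B = −(1/2)HDH with H the centering matrix. If B is positive semidefinite with rank(B) ≤ d, then there exist points p_1,...,p_n ∈ ℝ^d with ‖p_i − p_j‖² = D_{ij} for all i, j. -/
open Matrix

noncomputable def padIso (m d : ℕ) (h : m ≤ d) :
    EuclideanSpace ℝ (Fin m) →ₗᵢ[ℝ] EuclideanSpace ℝ (Fin d) where
  toLinearMap :=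
  { toFun := fun x => WithLp.toLp 2 (fun j : Fin d => if h' : (j : ℕ) < m then x ⟨j, h'⟩ else 0)
    map_add' := by
      intro x y; ext j
      by_cases h' : (j : ℕ) < m <;> simp [h', PiLp.add_apply]
    map_smul' := by
      intro c x; ext j
      by_cases h' : (j : ℕ) < m <;> simp [h', PiLp.smul_apply] }
  norm_map' := by
    intro x
    rw [EuclideanSpace.norm_eq, EuclideanSpace.norm_eq]
    congr 1
    have key : ∑ j : Fin d, ‖(if h' : (j : ℕ) < m then x ⟨j, h'⟩ else 0)‖ ^ 2
        = ∑ i : Fin m, ‖x i‖ ^ 2 := by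
      classical
      rw [← Finset.sum_subset (Finset.subset_univ
        ((Finset.univ : Finset (Fin m)).map ⟨Fin.castLE h, Fin.castLE_injective h⟩))]
      · rw [Finset.sum_map]
        apply Finset.sum_congr rfl
        intro i _
        simp [Fin.castLE]
      · intro j _ hj
        rw [dif_neg, norm_zero]
        · ring
        · intro h'
          exact hj (Finset.mem_map.mpr ⟨⟨j, h'⟩, Finset.mem_univ _, rfl⟩)
    exact key


/-- Converse direction of classical MDS: if `D` is symmetric with zero
diagonal and non-negative entries and `B = −(1/2)·H D H` is positive
semidefinite with rank at most `d`, then `D` is realised as the matrix of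
squared Euclidean distances of `n` points in `ℝ^d`. -/
theorem mds_embedding_of_psd {n d : ℕ}
    (D : Matrix (Fin n) (Fin n) ℝ) (hsym : D.IsSymm)
    (hdiag : ∀ i, D i i = 0) (hnn : ∀ i j, 0 ≤ D i j)
    (H : Matrix (Fin n) (Fin n) ℝ)
    (hH : H = 1 - (1 / (n : ℝ)) • Matrix.of (fun _ _ : Fin n => (1 : ℝ)))
    (B : Matrix (Fin n) (Fin n) ℝ) (hB : B = (-(1 / 2) : ℝ) • (H * D * H))
    (hpsd : B.PosSemidef) (hrank : B.rank ≤ d) :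
    ∃ p : Fin n → EuclideanSpace ℝ (Fin d),
      ∀ i j, ‖p i - p j‖ ^ 2 = D i j := by
  classical
  set c : ℝ := 1 / (n : ℝ) with hc
  -- entry formula for H
  have hHij : ∀ i k : Fin n, H i k = (if i = k then (1:ℝ) else 0) - c := by
    intro i k
    simp [hH, Matrix.one_apply, Matrix.sub_apply, hc]
  -- (H*D) entry
  have hHD : ∀ i l : Fin n, (H * D) i l = D i l - c * ∑ k, D k l := by
    intro i l
    simp only [Matrix.mul_apply, hHij, sub_mul, ite_mul, one_mul, zero_mul,
      Finset.sum_sub_distrib, Finset.sum_ite_eq, Finset.mem_univ, if_true,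
      Finset.mul_sum]
  -- (H*D*H) entry
  have hHDH : ∀ i j : Fin n, (H * D * H) i j =
      D i j - c * (∑ k, D k j) - c * (∑ l, D i l)
        + c * c * (∑ l, ∑ k, D k l) := by
    intro i j
    have h0 : (H * D * H) i j = ∑ l, (H * D) i l * H l j := Matrix.mul_apply
    rw [h0]
    have e1 : ∀ l : Fin n, (H * D) i l * H l j
        = (if l = j then (D i l - c * ∑ k, D k l) else 0)
          - (c * D i l - c * c * ∑ k, D k l) := by
      intro l
      rw [hHD, hHij]
      split <;> ring
    rw [Finset.sum_congr rfl (fun l _ => e1 l), Finset.sum_sub_distrib,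
      Finset.sum_ite_eq', Finset.sum_sub_distrib, ← Finset.mul_sum]
    simp only [Finset.mem_univ, if_true, Finset.mul_sum]
    ring_nf
  -- symmetry: column sums = row sums
  have hCR : ∀ i : Fin n, (∑ k, D k i) = ∑ k, D i k :=
    fun i => Finset.sum_congr rfl fun k _ => hsym.apply i k
  -- key entry identity
  have hkey : ∀ i j : Fin n, B i i - 2 * B i j + B j j = D i j := by
    intro i j
    have hBij : ∀ i j : Fin n, B i j = (-(1/2) : ℝ) * (H * D * H) i j := by
      intro i j; rw [hB]; simp [Matrix.smul_apply, smul_eq_mul]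
    rw [hBij, hBij, hBij, hHDH, hHDH, hHDH, hdiag i, hdiag j, hCR i, hCR j]
    ring
  -- factor B = Aᴴ * A
  obtain ⟨A, hA⟩ : ∃ A : Matrix (Fin n) (Fin n) ℝ, B = Aᴴ * A := by
    open scoped MatrixOrder in exact CStarAlgebra.nonneg_iff_eq_star_mul_self.mp hpsd.nonneg
  have hBent : ∀ i j : Fin n, B i j = ∑ k, A k i * A k j := by
    intro i j
    rw [hA]
    simp [Matrix.mul_apply, Matrix.conjTranspose_apply]
  -- columns of A as vectors in Euclidean space
  set v : Fin n → EuclideanSpace ℝ (Fin n) := fun i => WithLp.toLp 2 (fun k => A k i) with hv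
  have hinner : ∀ i j : Fin n, inner ℝ (v i) (v j) = B i j := by
    intro i j
    rw [hBent]
    simp [PiLp.inner_apply, RCLike.inner_apply, hv, mul_comm]
  have hnorm : ∀ i j : Fin n, ‖v i - v j‖ ^ 2 = D i j := by
    intro i j
    rw [norm_sub_sq_real, ← real_inner_self_eq_norm_sq, ← real_inner_self_eq_norm_sq,
      hinner, hinner, hinner]
    exact hkey i j
  -- the span of the columns
  set W : Submodule ℝ (EuclideanSpace ℝ (Fin n)) := Submodule.span ℝ (Set.range v) with hW
  have hmem : ∀ i, v i ∈ W := fun i => Submodule.subset_span (Set.mem_range_self i)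
  have hfr : Module.finrank ℝ W ≤ d := by
    have h1 : A.rank = Module.finrank ℝ W := by
      rw [Matrix.rank_eq_finrank_span_cols]
      have hWm : W = (Submodule.span ℝ (Set.range A.col)).map
          (WithLp.linearEquiv 2 ℝ (Fin n → ℝ)).symm.toLinearMap := by
        rw [hW, Submodule.map_span, ← Set.range_comp]; rfl
      rw [hWm, LinearEquiv.finrank_map_eq]
    have h2 : B.rank = A.rank := by rw [hA]; exact Matrix.rank_conjTranspose_mul_self A
    rw [← h1, ← h2]
    exact hrank
  -- isometric embedding of W into ℝ^d
  let e : W ≃ₗᵢ[ℝ] EuclideanSpace ℝ (Fin (Module.finrank ℝ W)) := (stdOrthonormalBasis ℝ W).repr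
  let f : W →ₗᵢ[ℝ] EuclideanSpace ℝ (Fin d) :=
    (padIso _ d hfr).comp e.toLinearIsometry
  refine ⟨fun i => f ⟨v i, hmem i⟩, fun i j => ?_⟩
  rw [← LinearIsometry.map_sub]
  rw [f.norm_map]
  have : ‖(⟨v i, hmem i⟩ - ⟨v j, hmem j⟩ : W)‖ = ‖v i - v j‖ := rfl
  rw [this]
  exact hnorm i j
end

section
/- Quantitative monotonicity at the fixed point of the linear gradient flow: let α ∈ ℝ^{n×n} be symmetric positive definite with smallest eigenvalue λ_min > 0, and b_1,...,b_n ∈ ℝ^d. Suppose (i) α_{ij} = f(d_{ij}) for distances d_{ij} ∈ [0,√2] of a metric and an L_f-Lipschitz f bounded by ‖f‖_∞, (ii) ‖b_i − b_j‖ ≤ C_b·d_{ij}, and (iii) the unique solution P* of Σ_ℓ α_{iℓ} p_ℓ* = b_i satisfies ‖p_ℓ*‖ ≤ R for all ℓ. Then ‖p_i* − p_j*‖ ≤ (C_b + n·R·L_f)/λ_min · d_{ij} for all i, j. -/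
open Matrix
open scoped RealInnerProductSpace

/-- Quantitative monotonicity at the fixed point of the linear gradient flow:
if `α` is symmetric positive definite with smallest eigenvalue `λ_min`,
`α_{ij} = f(d_{ij})` for a Lipschitz, bounded `f` applied to the distances of a
metric on `{1,…,n}` bounded by `√2`, the forcing satisfies
`‖b_i − b_j‖ ≤ C_b·d_{ij}`, and the unique solution `P*` of `α P* = b` has rows
of norm at most `R`, then `‖p_i* − p_j*‖ ≤ (C_b + n·R·L_f)/λ_min · d_{ij}`. -/
theorem fixed_point_quantitative_monotonicity {n d : ℕ}
    (α : Matrix (Fin n) (Fin n) ℝ) (hsym : α.IsSymm) (hpd : α.PosDef)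
    (lamMin : ℝ) (hlam : 0 < lamMin)
    (hquad : ∀ x : Fin n → ℝ, lamMin * ∑ i, (x i) ^ 2 ≤ x ⬝ᵥ (α *ᵥ x))
    (dm : Fin n → Fin n → ℝ)
    (hd0 : ∀ i, dm i i = 0) (hdsym : ∀ i j, dm i j = dm j i)
    (hdnn : ∀ i j, 0 ≤ dm i j)
    (hdtri : ∀ i j k, dm i k ≤ dm i j + dm j k)
    (hdbd : ∀ i j, dm i j ≤ Real.sqrt 2)
    (f : ℝ → ℝ) (Lf Fsup : ℝ) (hLf : 0 ≤ Lf)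
    (hflip : ∀ x y, |f x - f y| ≤ Lf * |x - y|)
    (hfbd : ∀ x, |f x| ≤ Fsup)
    (hαf : ∀ i j, α i j = f (dm i j))
    (b p : Fin n → EuclideanSpace ℝ (Fin d)) (Cb R : ℝ)
    (hb : ∀ i j, ‖b i - b j‖ ≤ Cb * dm i j)
    (hsol : ∀ i, ∑ ℓ, α i ℓ • p ℓ = b i)
    (hR : ∀ ℓ, ‖p ℓ‖ ≤ R) :
    ∀ i j, ‖p i - p j‖ ≤ (Cb + n * R * Lf) / lamMin * dm i j := by
  intro i j
  rcases eq_or_ne i j with rfl | hij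
  · simp [hd0 i]
  set σ := Equiv.swap i j with hσ
  set q := p i - p j with hq
  set M := Cb + (n : ℝ) * R * Lf with hM
  set dd := dm i j with hdd
  have hddnn : 0 ≤ dd := hdnn i j
  have hRnn : 0 ≤ R := le_trans (norm_nonneg _) (hR i)
  have hCbd : 0 ≤ Cb * dd := le_trans (norm_nonneg _) (hb i j)
  -- entrywise Lipschitz bound
  have hentry : ∀ ℓ : Fin n, |α i ℓ - α j ℓ| ≤ Lf * dd := by
    intro ℓ
    have h1 : |dm i ℓ - dm j ℓ| ≤ dd := by
      rw [abs_le]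
      constructor
      · have := hdtri j i ℓ
        have h2 := hdsym j i
        have h3 : dd = dm i j := rfl
        linarith
      · have := hdtri i j ℓ
        linarith
    calc |α i ℓ - α j ℓ| = |f (dm i ℓ) - f (dm j ℓ)| := by rw [hαf, hαf]
      _ ≤ Lf * |dm i ℓ - dm j ℓ| := hflip _ _
      _ ≤ Lf * dd := by nlinarith
  -- the swapped difference vector
  set v : Fin n → EuclideanSpace ℝ (Fin d) := fun ℓ => p ℓ - p (σ ℓ) with hv
  have hvi : v i = q := by simp [hv, hσ, hq]
  have hvj : v j = -q := by simp [hv, hσ, hq, neg_sub]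
  have hv0 : ∀ ℓ, ℓ ≠ i → ℓ ≠ j → v ℓ = 0 := by
    intro ℓ h1 h2
    simp [hv, hσ, Equiv.swap_apply_of_ne_of_ne h1 h2]
  -- coordinatewise norms
  have hnormsq : ∀ x : EuclideanSpace ℝ (Fin d), ‖x‖ ^ 2 = ∑ k, (x k) ^ 2 := by
    intro x
    rw [EuclideanSpace.norm_eq, Real.sq_sqrt (by positivity)]
    simp [sq_abs]
  have hinner : ∀ x y : EuclideanSpace ℝ (Fin d), ⟪x, y⟫ = ∑ k, x k * y k := by
    intro x y
    simp [PiLp.inner_apply, RCLike.inner_apply, starRingEnd_apply, mul_comm]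
  -- quadratic lower bound for vector-valued x
  have hquadv : lamMin * ∑ ℓ, ‖v ℓ‖ ^ 2 ≤ ∑ ℓ, ⟪v ℓ, ∑ m, α ℓ m • v m⟫ := by
    have key : ∀ k : Fin d,
        lamMin * ∑ ℓ, (v ℓ k) ^ 2 ≤ ∑ ℓ, (v ℓ k) * ∑ m, α ℓ m * (v m k) := by
      intro k
      simpa [dotProduct, mulVec] using hquad (fun ℓ => v ℓ k)
    calc lamMin * ∑ ℓ, ‖v ℓ‖ ^ 2
        = ∑ k : Fin d, lamMin * ∑ ℓ, (v ℓ k) ^ 2 := by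
          rw [← Finset.mul_sum]
          congr 1
          rw [Finset.sum_comm]
          exact Finset.sum_congr rfl fun ℓ _ => hnormsq (v ℓ)
      _ ≤ ∑ k : Fin d, ∑ ℓ, (v ℓ k) * ∑ m, α ℓ m * (v m k) :=
          Finset.sum_le_sum fun k _ => key k
      _ = ∑ ℓ, ⟪v ℓ, ∑ m, α ℓ m • v m⟫ := by
          rw [Finset.sum_comm]
          refine Finset.sum_congr rfl fun ℓ _ => ?_
          rw [hinner]
          refine Finset.sum_congr rfl fun k _ => ?_
          congr 1
          rw [show (∑ m, α ℓ m • v m) k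
              = EuclideanSpace.projₗ (𝕜 := ℝ) k (∑ m, α ℓ m • v m) from rfl,
            map_sum]
          simp only [_root_.map_smul, smul_eq_mul]
          rfl
  -- rewrite α v using the solution
  have hD : ∀ ℓ, ∑ m, α ℓ m • v m = b ℓ - ∑ m, α ℓ (σ m) • p m := by
    intro ℓ
    have h1 : ∑ m, α ℓ m • p (σ m) = ∑ m, α ℓ (σ m) • p m := by
      rw [← Equiv.sum_comp σ (fun m => α ℓ (σ m) • p m)]
      simp [hσ]
    calc ∑ m, α ℓ m • v m = ∑ m, (α ℓ m • p m - α ℓ m • p (σ m)) := by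
          simp [hv, smul_sub]
      _ = (∑ m, α ℓ m • p m) - ∑ m, α ℓ m • p (σ m) := Finset.sum_sub_distrib _ _
      _ = b ℓ - ∑ m, α ℓ (σ m) • p m := by rw [hsol ℓ, h1]
  obtain ⟨D, hDr⟩ : ∃ D : Fin n → EuclideanSpace ℝ (Fin d),
      ∀ ℓ, D ℓ = b ℓ - ∑ m, α ℓ (σ m) • p m := ⟨_, fun ℓ => rfl⟩
  have hsum : ∑ ℓ, ⟪v ℓ, ∑ m, α ℓ m • v m⟫ = ⟪q, D i - D j⟫ := by
    have step : ∀ ℓ, ⟪v ℓ, ∑ m, α ℓ m • v m⟫ = ⟪v ℓ, D ℓ⟫ := fun ℓ => by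
      rw [hD ℓ, hDr ℓ]
    rw [Finset.sum_congr rfl fun ℓ _ => step ℓ]
    rw [← Finset.sum_subset (Finset.subset_univ ({i, j} : Finset (Fin n)))
      (by
        intro ℓ _ hℓ
        simp only [Finset.mem_insert, Finset.mem_singleton, not_or] at hℓ
        rw [hv0 ℓ hℓ.1 hℓ.2, inner_zero_left])]
    rw [Finset.sum_pair hij, hvi, hvj, inner_neg_left, inner_sub_right]
    ring
  -- norm bound on D i - D j
  have hDnorm : ‖D i - D j‖ ≤ M * dd := by
    have hDij : D i - D j = (b i - b j) - ∑ m, (α i (σ m) - α j (σ m)) • p m := by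
      rw [hDr i, hDr j]
      have : ∑ m, (α i (σ m) - α j (σ m)) • p m
          = (∑ m, α i (σ m) • p m) - ∑ m, α j (σ m) • p m := by
        rw [← Finset.sum_sub_distrib]
        exact Finset.sum_congr rfl fun m _ => sub_smul _ _ _
      rw [this]
      abel
    calc ‖D i - D j‖ ≤ ‖b i - b j‖ + ‖∑ m, (α i (σ m) - α j (σ m)) • p m‖ := by
          rw [hDij]; exact norm_sub_le _ _
      _ ≤ Cb * dd + ∑ m, ‖(α i (σ m) - α j (σ m)) • p m‖ :=
          add_le_add (hb i j) (norm_sum_le _ _)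
      _ ≤ Cb * dd + ∑ _m : Fin n, (Lf * dd) * R := by
          refine add_le_add_right (Finset.sum_le_sum fun m _ => ?_) _
          rw [norm_smul, Real.norm_eq_abs]
          exact mul_le_mul (hentry (σ m)) (hR m) (norm_nonneg _) (by positivity)
      _ = M * dd := by
          rw [Finset.sum_const, Finset.card_univ, Fintype.card_fin]
          simp only [nsmul_eq_mul, hM]
          ring
  -- combine
  have hmain : lamMin * ‖q‖ ^ 2 ≤ ‖q‖ * (M * dd) := by
    have h1 : ‖q‖ ^ 2 ≤ ∑ ℓ, ‖v ℓ‖ ^ 2 := by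
      calc ‖q‖ ^ 2 = ‖v i‖ ^ 2 := by rw [hvi]
        _ ≤ ∑ ℓ, ‖v ℓ‖ ^ 2 := Finset.single_le_sum (f := fun ℓ => ‖v ℓ‖ ^ 2)
            (fun ℓ _ => sq_nonneg _) (Finset.mem_univ i)
    have h3 : ⟪q, D i - D j⟫ ≤ ‖q‖ * ‖D i - D j‖ := real_inner_le_norm _ _
    have h2 := hquadv
    rw [hsum] at h2
    nlinarith [norm_nonneg q, hDnorm, mul_le_mul_of_nonneg_left h1 hlam.le]
  have hMdd : 0 ≤ M * dd := by
    have h4 : 0 ≤ (n : ℝ) * R * Lf * dd := by positivity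
    nlinarith [hCbd]
  rcases eq_or_lt_of_le (norm_nonneg q) with h0 | h0
  · rw [← h0]
    calc (0 : ℝ) ≤ (M * dd) / lamMin := div_nonneg hMdd hlam.le
      _ = M / lamMin * dd := by ring
  · rw [div_mul_eq_mul_div, le_div_iff₀ hlam]
    have h5 : ‖q‖ * (lamMin * ‖q‖) ≤ ‖q‖ * (M * dd) := by
      calc ‖q‖ * (lamMin * ‖q‖) = lamMin * ‖q‖ ^ 2 := by ring
        _ ≤ ‖q‖ * (M * dd) := hmain
    have h6 : lamMin * ‖q‖ ≤ M * dd := (mul_le_mul_iff_right₀ h0).mp h5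
    linarith
end
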